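/- Let L(λ) and P(λ) be the 2×2 matrices L = [[(u+λ⁻¹v−λ)/2, 0],[1, (λ−λ⁻¹v−u)/2]] and P = [[u_x/2 + (u+λ)(u+λ⁻¹v−λ)/2, 0],[u+λ, −u_x/2 + (u+λ)(λ−u−λ⁻¹v)/2]]. Then the zero-curvature equation D_t L − D_x P + [L, P] = 0 holds for all λ ≠ 0 if and only if u, v satisfy u_t = u_xx + 2 u u_x + v_x and v_t = (u v)_x. -/

import Mathlib

noncomputable def Dx (f : ℝ → ℝ → ℝ) : ℝ → ℝ → ℝ := fun x t => deriv (fun y => f y t) x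
noncomputable def Dt (f : ℝ → ℝ → ℝ) : ℝ → ℝ → ℝ := fun x t => deriv (fun s => f x s) t

noncomputable def DxM (F : ℝ → ℝ → Matrix (Fin 2) (Fin 2) ℝ) :
    ℝ → ℝ → Matrix (Fin 2) (Fin 2) ℝ :=
  fun x t => Matrix.of fun i j => deriv (fun y => F y t i j) x

noncomputable def DtM (F : ℝ → ℝ → Matrix (Fin 2) (Fin 2) ℝ) :
    ℝ → ℝ → Matrix (Fin 2) (Fin 2) ℝ :=
  fun x t => Matrix.of fun i j => deriv (fun s => F x s i j) t

lemma diff_slice_x {f : ℝ → ℝ → ℝ} (hf : ContDiff ℝ (⊤ : ℕ∞) (Function.uncurry f)) (t : ℝ) :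
    Differentiable ℝ (fun y => f y t) :=
  (hf.comp (contDiff_id.prodMk contDiff_const)).differentiable (by simp)

lemma diff_slice_t {f : ℝ → ℝ → ℝ} (hf : ContDiff ℝ (⊤ : ℕ∞) (Function.uncurry f)) (x : ℝ) :
    Differentiable ℝ (fun s => f x s) :=
  (hf.comp (contDiff_const.prodMk contDiff_id)).differentiable (by simp)

lemma contDiff_Dx {f : ℝ → ℝ → ℝ} (hf : ContDiff ℝ (⊤ : ℕ∞) (Function.uncurry f)) :
    ContDiff ℝ (⊤ : ℕ∞) (Function.uncurry (Dx f)) := by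
  have h1 : Function.uncurry (Dx f)
      = fun p : ℝ × ℝ => fderiv ℝ (Function.uncurry f) p (1, 0) := by
    funext p
    obtain ⟨x, t⟩ := p
    show deriv (fun y => f y t) x = _
    have hh : HasFDerivAt (fun y : ℝ => (y, t))
        ((ContinuousLinearMap.id ℝ ℝ).prod 0) x :=
      (hasFDerivAt_id x).prodMk (hasFDerivAt_const t x)
    have hcomp : HasFDerivAt (fun y => f y t)
        ((fderiv ℝ (Function.uncurry f) (x, t)).comp
          ((ContinuousLinearMap.id ℝ ℝ).prod 0)) x :=
      by
        have hc := ((hf.differentiable (by simp : ((⊤ : ℕ∞) : WithTop ℕ∞) ≠ 0) (x, t)).hasFDerivAt).comp x hh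
        exact hc
    have := hcomp.hasDerivAt.deriv
    simpa using this
  rw [h1]
  exact (hf.fderiv_right (by simp)).clm_apply contDiff_const

/-- The zero-curvature equation `D_t L − D_x P + [L,P] = 0` for the 2×2 Lax
matrices of the two-component Burgers system holds for all `λ ≠ 0` iff `u, v`
satisfy `u_t = u_xx + 2uu_x + v_x` and `v_t = (uv)_x`. -/
theorem stmt_9 (u v : ℝ → ℝ → ℝ)
    (hu : ContDiff ℝ (⊤ : ℕ∞) (Function.uncurry u)) (hv : ContDiff ℝ (⊤ : ℕ∞) (Function.uncurry v)) :
    (∀ lam : ℝ, lam ≠ 0 → ∀ x t : ℝ,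
        DtM (fun y s => !![(u y s + lam⁻¹ * v y s - lam) / 2, 0;
                           1, (lam - lam⁻¹ * v y s - u y s) / 2]) x t
        - DxM (fun y s => !![Dx u y s / 2
                               + (u y s + lam) * (u y s + lam⁻¹ * v y s - lam) / 2, 0;
                             u y s + lam,
                             -(Dx u y s) / 2
                               + (u y s + lam) * (lam - u y s - lam⁻¹ * v y s) / 2]) x t
        + ((!![(u x t + lam⁻¹ * v x t - lam) / 2, 0;
               1, (lam - lam⁻¹ * v x t - u x t) / 2] :
                Matrix (Fin 2) (Fin 2) ℝ)
             * !![Dx u x t / 2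
                    + (u x t + lam) * (u x t + lam⁻¹ * v x t - lam) / 2, 0;
                  u x t + lam,
                  -(Dx u x t) / 2
                    + (u x t + lam) * (lam - u x t - lam⁻¹ * v x t) / 2]
           - !![Dx u x t / 2
                  + (u x t + lam) * (u x t + lam⁻¹ * v x t - lam) / 2, 0;
                u x t + lam,
                -(Dx u x t) / 2
                  + (u x t + lam) * (lam - u x t - lam⁻¹ * v x t) / 2]
             * !![(u x t + lam⁻¹ * v x t - lam) / 2, 0;
                  1, (lam - lam⁻¹ * v x t - u x t) / 2]) = 0)
      ↔ ((∀ x t, Dt u x t = Dx (Dx u) x t + 2 * u x t * Dx u x t + Dx v x t)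
          ∧ (∀ x t, Dt v x t = Dx (fun y s => u y s * v y s) x t)) := by
  have hut : ∀ x t, HasDerivAt (fun s => u x s) (Dt u x t) t :=
    fun x t => (diff_slice_t hu x t).hasDerivAt
  have hvt : ∀ x t, HasDerivAt (fun s => v x s) (Dt v x t) t :=
    fun x t => (diff_slice_t hv x t).hasDerivAt
  have hux : ∀ x t, HasDerivAt (fun y => u y t) (Dx u x t) x :=
    fun x t => (diff_slice_x hu t x).hasDerivAt
  have hvx : ∀ x t, HasDerivAt (fun y => v y t) (Dx v x t) x :=
    fun x t => (diff_slice_x hv t x).hasDerivAt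
  have huxx : ∀ x t, HasDerivAt (fun y => Dx u y t) (Dx (Dx u) x t) x :=
    fun x t => (diff_slice_x (contDiff_Dx hu) t x).hasDerivAt
  have hprod : ∀ x t, Dx (fun y s => u y s * v y s) x t
      = Dx u x t * v x t + u x t * Dx v x t :=
    fun x t => ((hux x t).mul (hvx x t)).deriv
  have dL00t : ∀ (lam x t : ℝ),
      deriv (fun s => (u x s + lam⁻¹ * v x s - lam) / 2) t
        = (Dt u x t + lam⁻¹ * Dt v x t) / 2 :=
    fun lam x t => ((((hut x t).add ((hvt x t).const_mul lam⁻¹)).sub_const lam).div_const 2).deriv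
  have dL11t : ∀ (lam x t : ℝ),
      deriv (fun s => (lam - lam⁻¹ * v x s - u x s) / 2) t
        = (0 - lam⁻¹ * Dt v x t - Dt u x t) / 2 :=
    fun lam x t => ((((hasDerivAt_const t lam).sub ((hvt x t).const_mul lam⁻¹)).sub (hut x t)).div_const 2).deriv
  have dP00x : ∀ (lam x t : ℝ),
      deriv (fun y => Dx u y t / 2 + (u y t + lam) * (u y t + lam⁻¹ * v y t - lam) / 2) x
        = Dx (Dx u) x t / 2
          + (Dx u x t * (u x t + lam⁻¹ * v x t - lam)
             + (u x t + lam) * (Dx u x t + lam⁻¹ * Dx v x t)) / 2 :=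
    fun lam x t => (((huxx x t).div_const 2).add
      ((((hux x t).add_const lam).mul
        (((hux x t).add ((hvx x t).const_mul lam⁻¹)).sub_const lam)).div_const 2)).deriv
  have dP11x : ∀ (lam x t : ℝ),
      deriv (fun y => -(Dx u y t) / 2 + (u y t + lam) * (lam - u y t - lam⁻¹ * v y t) / 2) x
        = -(Dx (Dx u) x t) / 2
          + (Dx u x t * (lam - u x t - lam⁻¹ * v x t)
             + (u x t + lam) * (0 - Dx u x t - lam⁻¹ * Dx v x t)) / 2 :=
    fun lam x t => ((((huxx x t).neg).div_const 2).add
      ((((hux x t).add_const lam).mul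
        (((hasDerivAt_const x lam).sub (hux x t)).sub ((hvx x t).const_mul lam⁻¹))).div_const 2)).deriv
  have dP10x : ∀ (lam x t : ℝ),
      deriv (fun y => u y t + lam) x = Dx u x t :=
    fun lam x t => ((hux x t).add_const lam).deriv
  constructor
  · intro H
    have key : ∀ lam : ℝ, lam ≠ 0 → ∀ x t : ℝ,
        Dt u x t + lam⁻¹ * Dt v x t
          = Dx (Dx u) x t + 2 * u x t * Dx u x t + Dx v x t
            + lam⁻¹ * (Dx u x t * v x t + u x t * Dx v x t) := by
      intro lam hl x t
      have h1 := congrArg (fun M : Matrix (Fin 2) (Fin 2) ℝ => M 0 0) (H lam hl x t)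
      simp only [DtM, DxM, Matrix.sub_apply, Matrix.add_apply, Matrix.mul_apply,
        Fin.sum_univ_two, Matrix.of_apply, Matrix.cons_val', Matrix.cons_val_zero,
        Matrix.cons_val_one, Matrix.head_cons, Matrix.head_fin_const, Matrix.empty_val',
        Matrix.cons_val_fin_one, Matrix.zero_apply] at h1
      rw [dL00t lam x t, dP00x lam x t] at h1
      linear_combination (2:ℝ) * h1 + Dx v x t * mul_inv_cancel₀ hl
    constructor
    · intro x t
      have k1 := key 1 one_ne_zero x t
      have k2 := key 2 two_ne_zero x t
      simp only [inv_one, one_mul] at k1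
      linarith [k1, k2]
    · intro x t
      have k1 := key 1 one_ne_zero x t
      have k2 := key 2 two_ne_zero x t
      simp only [inv_one, one_mul] at k1
      rw [hprod x t]
      linarith [k1, k2]
  · rintro ⟨h1, h2⟩ lam hl x t
    have h2' : ∀ x t : ℝ, Dt v x t = Dx u x t * v x t + u x t * Dx v x t :=
      fun x t => (h2 x t).trans (hprod x t)
    ext i j
    fin_cases i <;> fin_cases j <;>
      simp only [DtM, DxM, Matrix.sub_apply, Matrix.add_apply, Matrix.mul_apply,
        Fin.sum_univ_two, Matrix.of_apply, Matrix.cons_val', Matrix.cons_val_zero,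
        Matrix.cons_val_one, Matrix.head_cons, Matrix.head_fin_const, Matrix.empty_val',
        Matrix.cons_val_fin_one, Matrix.zero_apply, Fin.isValue, Fin.mk_zero, Fin.mk_one]
    · rw [dL00t lam x t, dP00x lam x t]
      linear_combination (h1 x t) / 2 + lam⁻¹ / 2 * h2' x t
        - Dx v x t / 2 * mul_inv_cancel₀ hl
    · simp
    · rw [dP10x lam x t]
      simp only [deriv_const']
      ring
    · rw [dL11t lam x t, dP11x lam x t]
      linear_combination -(h1 x t) / 2 - lam⁻¹ / 2 * h2' x t
        + Dx v x t / 2 * mul_inv_cancel₀ hl
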